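/- arXiv:1705.08203 — 2 statements merged into one kernel-verified Lean document; each statement's English description precedes it below -/
import Mathlib

section
/- (Cylindrical Equivalence.) Let n ≥ 2, 2 ≤ p ≤ ∞, 1 ≤ k ≤ n, and let u(x) = U(|Qᵀ(x−x₀)|) be a k-cylindrical C² function, where U is C², Q is an n×k real matrix with QᵀQ = I_k and x₀ ∈ ℝⁿ. Assume U′(r)/r ≤ U″(r) for all relevant r > 0, and additionally U″ ≥ 0 if k < n. Then at every point x with Qᵀ(x−x₀) ≠ 0: Δ_p u(x) = |∇u(x)|^{p−2}·D_p u(x) when 2 ≤ p < ∞ (the right-hand side interpreted as 0 when ∇u(x) = 0 and p > 2), and Δ_∞ u(x) = |∇u(x)|²·D_∞ u(x) when p = ∞. -/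
open scoped ENNReal
open Filter Matrix

noncomputable section

/-- Hessian matrix of `u` at `x` (entries are second partial derivatives). -/
def hess {n : ℕ} (u : EuclideanSpace ℝ (Fin n) → ℝ) (x : EuclideanSpace ℝ (Fin n)) :
    Matrix (Fin n) (Fin n) ℝ :=
  Matrix.of fun i j =>
    iteratedFDeriv ℝ 2 u x ![EuclideanSpace.single i 1, EuclideanSpace.single j 1]

/-- Laplacian: trace of the Hessian. -/
def lapl {n : ℕ} (u : EuclideanSpace ℝ (Fin n) → ℝ) (x : EuclideanSpace ℝ (Fin n)) : ℝ :=
  ∑ i, hess u x i i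

/-- Quadratic form `zᵀ A z`. -/
def quadForm {n : ℕ} (A : Matrix (Fin n) (Fin n) ℝ) (z : EuclideanSpace ℝ (Fin n)) : ℝ :=
  ∑ i, ∑ j, z i * A i j * z j

/-- Largest eigenvalue of a (symmetric) matrix: the max of `zᵀAz` over unit vectors `z`. -/
def lamMax {n : ℕ} (A : Matrix (Fin n) (Fin n) ℝ) : ℝ :=
  sSup {r : ℝ | ∃ z : EuclideanSpace ℝ (Fin n), ‖z‖ = 1 ∧ r = quadForm A z}

open Classical in
/-- Dominative p-Laplacian `D_p u(x)`, for `2 ≤ p ≤ ∞`. -/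
def Dop {n : ℕ} (p : ℝ≥0∞) (u : EuclideanSpace ℝ (Fin n) → ℝ)
    (x : EuclideanSpace ℝ (Fin n)) : ℝ :=
  if p = ⊤ then lamMax (hess u x)
  else (p.toReal - 2) * lamMax (hess u x) + lapl u x

open Classical in
/-- p-Laplacian `Δ_p u(x)` (the `∞`-Laplacian `∇u H u ∇uᵀ` for `p = ∞`).
For finite `p`, `Δ_p u = |∇u|^{p-2} Δu + (p-2)|∇u|^{p-4} ∇u Hu ∇uᵀ` with real powers,
which is automatically `0` at critical points when `p > 2` and `Δu` when `p = 2`. -/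
def DeltaOp {n : ℕ} (p : ℝ≥0∞) (u : EuclideanSpace ℝ (Fin n) → ℝ)
    (x : EuclideanSpace ℝ (Fin n)) : ℝ :=
  if p = ⊤ then quadForm (hess u x) (gradient u x)
  else ‖gradient u x‖ ^ (p.toReal - 2) * lapl u x
    + (p.toReal - 2) * ‖gradient u x‖ ^ (p.toReal - 4) * quadForm (hess u x) (gradient u x)

open Classical in
/-- Radial profile `W_{k,p}` of the fundamental solution of the p-Laplace equation in ℝᵏ. -/
def Wfun (p : ℝ≥0∞) (k : ℕ) (r : ℝ) : ℝ :=
  if p = ⊤ ∨ k = 1 then -r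
  else if p.toReal = k then -Real.log r
  else -((p.toReal - 1) / (p.toReal - k)) * r ^ ((p.toReal - k) / (p.toReal - 1))

/-- Euclidean norm of a plain vector in `Fin k → ℝ`. -/
def enorm' {k : ℕ} (v : Fin k → ℝ) : ℝ := Real.sqrt (∑ i, v i ^ 2)

/-- `u : Ω → (-∞,∞]` is a viscosity supersolution of `G(∇u, Hu) = 0` on `Ω`:
lower semicontinuous, `> -∞`, finite on a dense subset of `Ω`, and every `C²`
test function `φ` touching `u` from below at `x₀ ∈ Ω` satisfies `G φ x₀ ≤ 0`. -/
def ViscSupersol {n : ℕ}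
    (G : (EuclideanSpace ℝ (Fin n) → ℝ) → EuclideanSpace ℝ (Fin n) → ℝ)
    (Ω : Set (EuclideanSpace ℝ (Fin n))) (u : EuclideanSpace ℝ (Fin n) → EReal) : Prop :=
  LowerSemicontinuousOn u Ω ∧
  (∀ x ∈ Ω, u x ≠ ⊥) ∧
  Ω ⊆ closure {x | x ∈ Ω ∧ u x ≠ ⊤} ∧
  ∀ x₀ ∈ Ω, ∀ φ : EuclideanSpace ℝ (Fin n) → ℝ,
    ContDiffAt ℝ 2 φ x₀ → (φ x₀ : EReal) = u x₀ →
    (∀ᶠ x in nhdsWithin x₀ Ω, (φ x : EReal) ≤ u x) → G φ x₀ ≤ 0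

open Classical in
/-- EReal-valued fundamental solution `w_{m,p}` on ℝᵐ, equal to `⊤` at the pole when `p ≤ m`,
`p ≠ ∞`. -/
def wEReal (p : ℝ≥0∞) (m : ℕ) (x : EuclideanSpace ℝ (Fin m)) : EReal :=
  if x = 0 ∧ p ≤ (m : ℝ≥0∞) ∧ p ≠ ⊤ then (⊤ : EReal)
  else ((Wfun p m ‖x‖ : ℝ) : EReal)

end

/-!
Write `u = f ∘ A` with `A z = Qᵀ (z - x₀)` and `f w = U ‖w‖` radial on `ℝᵏ`. At `v = A x ≠ 0`,
with `r = ‖v‖`, the Hessian of `f` is `(U'/r) I + (U'' - U'/r) n nᵀ` for the unit vector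
`n = v / r`, and `∇u = U' Q n`. Since `U'/r ≤ U''`, the form `zᵀ Hu z` is at most `U'' ‖Qᵀ z‖²`,
hence at most `U''` on unit vectors (by `U'' ≥ 0` when `k < n`, and because `Qᵀ` is an isometry
when `k = n`), with equality at `z = Q n`. So `∇u` is an eigenvector for the top eigenvalue
`λ_u = U''`, i.e. `∇u Hu ∇uᵀ = ‖∇u‖² λ_u`, and substituting this into `Δ_p u` factors out
`‖∇u‖^(p-2) D_p u`.
-/

open Topology ContinuousLinearMap
open scoped RealInnerProductSpace InnerProduct

section Radial

variable {F : Type*} [NormedAddCommGroup F] [InnerProductSpace ℝ F] {U : ℝ → ℝ} {v : F}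

theorem hasFDerivAt_norm_of_ne_zero (hv : v ≠ 0) :
    HasFDerivAt (‖·‖) (‖v‖⁻¹ • innerSL ℝ v) v := by
  have hsq : ‖v‖ ^ 2 ≠ 0 := by positivity
  convert (hasStrictFDerivAt_norm_sq v).hasFDerivAt.sqrt hsq using 1
  · ext w; simp [Real.sqrt_sq (norm_nonneg w)]
  · ext w
    simp only [_root_.smul_apply, coe_innerSL_apply, smul_eq_mul, nsmul_eq_mul,
      Nat.cast_ofNat, Real.sqrt_sq (norm_nonneg v)]
    field_simp

theorem hasFDerivAt_radial (hU : DifferentiableAt ℝ U ‖v‖) (hv : v ≠ 0) :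
    HasFDerivAt (fun w => U ‖w‖) ((deriv U ‖v‖ / ‖v‖) • innerSL ℝ v) v := by
  refine (hU.hasDerivAt.comp_hasFDerivAt v (hasFDerivAt_norm_of_ne_zero hv)).congr_fderiv ?_
  rw [smul_smul, div_eq_mul_inv]

variable (U v) in
-- `show` retypes the conjugate-linear `innerSL ℝ` as a linear map, so that the sum typechecks.
noncomputable def radialHessian : F →L[ℝ] F →L[ℝ] ℝ :=
  (deriv U ‖v‖ / ‖v‖) • (show F →L[ℝ] F →L[ℝ] ℝ from innerSL ℝ) +
    ((deriv (deriv U) ‖v‖ - deriv U ‖v‖ / ‖v‖) / ‖v‖ ^ 2) • (innerSL ℝ v).smulRight (innerSL ℝ v)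

theorem radialHessian_apply (w w' : F) :
    radialHessian U v w w' = deriv U ‖v‖ / ‖v‖ * ⟪w, w'⟫ +
      (deriv (deriv U) ‖v‖ - deriv U ‖v‖ / ‖v‖) / ‖v‖ ^ 2 * (⟪v, w⟫ * ⟪v, w'⟫) :=
  rfl

theorem hasFDerivAt_fderiv_radial (hU : ContDiff ℝ 2 U) (hv : v ≠ 0) :
    HasFDerivAt (fderiv ℝ fun w => U ‖w‖) (radialHessian U v) v := by
  have hU1 : Differentiable ℝ U := hU.differentiable two_ne_zero
  have hU2 : Differentiable ℝ (deriv U) := (hU.iterate_deriv' 1 1).differentiable one_ne_zero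
  have hfderiv : (fderiv ℝ fun w => U ‖w‖) =ᶠ[𝓝 v]
      fun w => (deriv U ‖w‖ / ‖w‖) • innerSL ℝ w :=
    (eventually_ne_nhds hv).mono fun w hw => (hasFDerivAt_radial (hU1 _) hw).fderiv
  have hcoeff : HasFDerivAt (fun w : F => deriv U ‖w‖ / ‖w‖)
      (((deriv (deriv U) ‖v‖ * ‖v‖ - deriv U ‖v‖ * 1) / ‖v‖ ^ 2) • (‖v‖⁻¹ • innerSL ℝ v)) v :=
    ((hU2 _).hasDerivAt.div (hasDerivAt_id _) (norm_ne_zero_iff.mpr hv)).comp_hasFDerivAt v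
      (hasFDerivAt_norm_of_ne_zero hv)
  refine (hcoeff.smul (innerSL ℝ).hasFDerivAt).congr_of_eventuallyEq hfderiv |>.congr_fderiv ?_
  ext w w'
  rw [radialHessian_apply]
  simp only [mul_one, _root_.add_apply, _root_.smul_apply, smulRight_apply, coe_innerSL_apply,
    smul_eq_mul]
  field_simp
  rfl

theorem radialHessian_smul_self (hv : v ≠ 0) (a : ℝ) :
    radialHessian U v (a • v) (a • v) = deriv (deriv U) ‖v‖ * ‖a • v‖ ^ 2 := by
  have hr : ‖v‖ ≠ 0 := norm_ne_zero_iff.mpr hv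
  simp only [radialHessian_apply, inner_smul_left, inner_smul_right, real_inner_self_eq_norm_sq,
    norm_smul, Real.norm_eq_abs, mul_pow, sq_abs, conj_trivial]
  field_simp
  ring

theorem radialHessian_apply_self_le (hv : v ≠ 0)
    (hU : deriv U ‖v‖ / ‖v‖ ≤ deriv (deriv U) ‖v‖) (w : F) :
    radialHessian U v w w ≤ deriv (deriv U) ‖v‖ * ‖w‖ ^ 2 := by
  have hr : 0 < ‖v‖ := norm_pos_iff.mpr hv
  have hcs : ⟪v, w⟫ * ⟪v, w⟫ ≤ ‖v‖ ^ 2 * ‖w‖ ^ 2 := by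
    rw [← mul_pow, ← sq]
    exact sq_le_sq' (neg_le_of_abs_le (abs_real_inner_le_norm v w)) (real_inner_le_norm v w)
  calc radialHessian U v w w
      ≤ deriv U ‖v‖ / ‖v‖ * ‖w‖ ^ 2 +
          (deriv (deriv U) ‖v‖ - deriv U ‖v‖ / ‖v‖) / ‖v‖ ^ 2 * (‖v‖ ^ 2 * ‖w‖ ^ 2) := by
        rw [radialHessian_apply, real_inner_self_eq_norm_sq]
        gcongr
    _ = deriv (deriv U) ‖v‖ * ‖w‖ ^ 2 := by
        field_simp
        ring

end Radial

section Affine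

variable {E F : Type*} [NormedAddCommGroup E] [NormedSpace ℝ E] [NormedAddCommGroup F]
  [NormedSpace ℝ F] {f : F → ℝ} {f'' : F →L[ℝ] F →L[ℝ] ℝ} (T : E →L[ℝ] F) {x₀ x : E}

theorem ContinuousLinearMap.hasFDerivAt_apply_sub (z : E) :
    HasFDerivAt (fun z => T (z - x₀)) T z :=
  T.hasFDerivAt.comp z ((hasFDerivAt_id z).sub_const x₀) |>.congr_fderiv (by simp)

theorem fderiv_fderiv_comp_affine_apply
    (hf : ∀ᶠ w in 𝓝 (T (x - x₀)), DifferentiableAt ℝ f w)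
    (hf'' : HasFDerivAt (fderiv ℝ f) f'' (T (x - x₀))) (h h' : E) :
    fderiv ℝ (fderiv ℝ fun z => f (T (z - x₀))) x h h' = f'' (T h) (T h') := by
  have hcont : Continuous fun z => T (z - x₀) := by fun_prop
  have hfderiv : (fderiv ℝ fun z => f (T (z - x₀))) =ᶠ[𝓝 x]
      fun z => (fderiv ℝ f (T (z - x₀))).comp T :=
    (hcont.continuousAt.eventually hf).mono fun z hz => (hz.hasFDerivAt.comp z (T.hasFDerivAt_apply_sub z)).fderiv
  have := ((hf''.comp x (T.hasFDerivAt_apply_sub x)).clm_comp (hasFDerivAt_const T x)).congr_of_eventuallyEq hfderiv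
  rw [this.fderiv]
  simp

end Affine

section Coisometry

variable {E F : Type*} [NormedAddCommGroup E] [InnerProductSpace ℝ E] [CompleteSpace E]
  [NormedAddCommGroup F] [InnerProductSpace ℝ F] [CompleteSpace F] {T : E →L[ℝ] F}

theorem ContinuousLinearMap.norm_map_of_adjoint_comp_self (hT : T† ∘L T = 1) (z : E) :
    ‖T z‖ = ‖z‖ := by
  refine (sq_eq_sq₀ (norm_nonneg _) (norm_nonneg _)).1 ?_
  rw [← real_inner_self_eq_norm_sq, ← real_inner_self_eq_norm_sq, ← adjoint_inner_left,
    ← comp_apply, hT, one_apply_eq_self]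

theorem ContinuousLinearMap.apply_adjoint_apply_of_comp_adjoint (hT : T ∘L T† = 1) (w : F) :
    T ((T†) w) = w := by
  rw [← comp_apply, hT, one_apply_eq_self]

theorem ContinuousLinearMap.norm_adjoint_apply_of_comp_adjoint (hT : T ∘L T† = 1) (w : F) :
    ‖(T†) w‖ = ‖w‖ :=
  norm_map_of_adjoint_comp_self (by rwa [adjoint_adjoint]) w

theorem ContinuousLinearMap.norm_apply_le_of_comp_adjoint (hT : T ∘L T† = 1) (z : E) :
    ‖T z‖ ≤ ‖z‖ := by
  have hadj : ‖T†‖ ≤ 1 :=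
    opNorm_le_bound _ zero_le_one fun w => by rw [norm_adjoint_apply_of_comp_adjoint hT, one_mul]
  rw [LinearIsometryEquiv.norm_map] at hadj
  simpa using T.le_of_opNorm_le hadj z

end Coisometry

section RadialComp

variable {E F : Type*} [NormedAddCommGroup E] [InnerProductSpace ℝ E] [CompleteSpace E]
  [NormedAddCommGroup F] [InnerProductSpace ℝ F] [CompleteSpace F] {U : ℝ → ℝ}
  {T : E →L[ℝ] F} {x₀ x : E}

theorem hasGradientAt_radial_comp (hU : DifferentiableAt ℝ U ‖T (x - x₀)‖)
    (hv : T (x - x₀) ≠ 0) :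
    HasGradientAt (fun z => U ‖T (z - x₀)‖)
      ((deriv U ‖T (x - x₀)‖ / ‖T (x - x₀)‖) • (T†) (T (x - x₀))) x := by
  rw [hasGradientAt_iff_hasFDerivAt]
  refine ((hasFDerivAt_radial hU hv).comp x (T.hasFDerivAt_apply_sub x)).congr_fderiv ?_
  ext h
  simp [adjoint_inner_left]

theorem radialHessian_apply_smul_adjoint {v : F} (hT : T ∘L T† = 1) (hv : v ≠ 0) (a : ℝ) :
    radialHessian U v (T (a • (T†) v)) (T (a • (T†) v)) =
      deriv (deriv U) ‖v‖ * ‖a • (T†) v‖ ^ 2 := by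
  rw [map_smul, apply_adjoint_apply_of_comp_adjoint hT, radialHessian_smul_self hv, norm_smul,
    norm_smul, norm_adjoint_apply_of_comp_adjoint hT]

theorem isGreatest_radialHessian_comp {v : F} (hT : T ∘L T† = 1) (hv : v ≠ 0)
    (hU : deriv U ‖v‖ / ‖v‖ ≤ deriv (deriv U) ‖v‖)
    (hside : 0 ≤ deriv (deriv U) ‖v‖ ∨ ∀ z, ‖T z‖ = ‖z‖) :
    IsGreatest {t | ∃ z : E, ‖z‖ = 1 ∧ t = radialHessian U v (T z) (T z)}
      (deriv (deriv U) ‖v‖) := by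
  have hunit : ‖‖v‖⁻¹ • (T†) v‖ = 1 := by
    rw [norm_smul, norm_adjoint_apply_of_comp_adjoint hT, norm_inv, norm_norm,
      inv_mul_cancel₀ (norm_ne_zero_iff.mpr hv)]
  refine ⟨⟨‖v‖⁻¹ • (T†) v, hunit, ?_⟩, ?_⟩
  · rw [radialHessian_apply_smul_adjoint hT hv, hunit, one_pow, mul_one]
  · rintro t ⟨z, hz, rfl⟩
    refine (radialHessian_apply_self_le hv hU (T z)).trans ?_
    rcases hside with hB | hiso
    · exact mul_le_of_le_one_right hB
        (pow_le_one₀ (norm_nonneg _) (hz ▸ norm_apply_le_of_comp_adjoint hT z))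
    · rw [hiso, hz, one_pow, mul_one]

end RadialComp

section MatrixAdjoint

open Matrix

variable {m n : Type*} [Fintype m] [Fintype n] [DecidableEq m] [DecidableEq n]

theorem Matrix.adjoint_toEuclideanLin_toContinuousLinearMap (A : Matrix m n ℝ) :
    (toEuclideanLin A).toContinuousLinearMap† = (toEuclideanLin Aᵀ).toContinuousLinearMap := by
  rw [← LinearMap.adjoint_toContinuousLinearMap, ← toEuclideanLin_conjTranspose_eq_adjoint,
    conjTranspose_eq_transpose_of_trivial]

theorem Matrix.toEuclideanLin_toContinuousLinearMap_comp_eq_one (A : Matrix m n ℝ)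
    (B : Matrix n m ℝ) (h : A * B = 1) :
    (toEuclideanLin A).toContinuousLinearMap ∘L (toEuclideanLin B).toContinuousLinearMap = 1 := by
  ext1 w
  simp [toLpLin_apply, mulVec_mulVec, h]

end MatrixAdjoint

theorem hess_apply {n : ℕ} (u : EuclideanSpace ℝ (Fin n) → ℝ) (x : EuclideanSpace ℝ (Fin n))
    (i j : Fin n) :
    hess u x i j =
      fderiv ℝ (fderiv ℝ u) x (EuclideanSpace.single i 1) (EuclideanSpace.single j 1) :=
  iteratedFDeriv_two_apply u x _

theorem quadForm_hess {n : ℕ} (u : EuclideanSpace ℝ (Fin n) → ℝ) (x z : EuclideanSpace ℝ (Fin n)) :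
    quadForm (hess u x) z = fderiv ℝ (fderiv ℝ u) x z z := by
  conv_rhs => rw [← (EuclideanSpace.basisFun (Fin n) ℝ).sum_repr z]
  simp only [quadForm, hess_apply, map_sum, map_smul, _root_.sum_apply, _root_.smul_apply,
    smul_eq_mul, Finset.mul_sum, EuclideanSpace.basisFun_repr, EuclideanSpace.basisFun_apply]
  rw [Finset.sum_comm]
  exact Finset.sum_congr rfl fun j _ => Finset.sum_congr rfl fun i _ => by ring

theorem enorm'_eq_norm {k : ℕ} (v : Fin k → ℝ) : enorm' v = ‖WithLp.toLp 2 v‖ := by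
  simp [enorm', EuclideanSpace.norm_eq]

theorem sub_two_mul_rpow_sub_four_mul_sq {g : ℝ} (hg : 0 ≤ g) (q : ℝ) :
    (q - 2) * (g ^ (q - 4) * g ^ 2) = (q - 2) * g ^ (q - 2) := by
  rcases hg.eq_or_lt with rfl | hg
  · rcases eq_or_ne q 2 with rfl | hq
    · simp
    · simp [Real.zero_rpow (sub_ne_zero.mpr hq)]
  · rw [← Real.rpow_natCast, ← Real.rpow_add hg]
    ring_nf

theorem DeltaOp_eq_of_quadForm_gradient {n : ℕ} {p : ℝ≥0∞} {u : EuclideanSpace ℝ (Fin n) → ℝ}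
    {x : EuclideanSpace ℝ (Fin n)}
    (h : quadForm (hess u x) (gradient u x) = ‖gradient u x‖ ^ 2 * lamMax (hess u x)) :
    DeltaOp p u x =
      (if p = ⊤ then ‖gradient u x‖ ^ (2 : ℝ) else ‖gradient u x‖ ^ (p.toReal - 2)) *
        Dop p u x := by
  by_cases hp : p = ⊤
  · simp only [DeltaOp, Dop, hp, if_true, h, Real.rpow_two]
  · simp only [DeltaOp, Dop, hp, if_false, h]
    linear_combination lamMax (hess u x) *
      sub_two_mul_rpow_sub_four_mul_sq (norm_nonneg (gradient u x)) p.toReal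

theorem stmt_3_general {n k : ℕ} (hkn : k ≤ n)
    (p : ℝ≥0∞)
    (Q : Matrix (Fin n) (Fin k) ℝ) (hQ : Qᵀ * Q = 1)
    (x₀ : EuclideanSpace ℝ (Fin n))
    (U : ℝ → ℝ) (hU : ContDiff ℝ 2 U)
    (u : EuclideanSpace ℝ (Fin n) → ℝ)
    (hu : ∀ x, u x = U (enorm' (Qᵀ.mulVec fun i => x i - x₀ i)))
    (hU1 : ∀ r : ℝ, 0 < r → deriv U r / r ≤ deriv (deriv U) r)
    (hU2 : k < n → ∀ r : ℝ, 0 < r → 0 ≤ deriv (deriv U) r) :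
    ∀ x : EuclideanSpace ℝ (Fin n), (Qᵀ.mulVec fun i => x i - x₀ i) ≠ 0 →
      DeltaOp p u x =
        (if p = ⊤ then ‖gradient u x‖ ^ (2 : ℝ) else ‖gradient u x‖ ^ (p.toReal - 2))
          * Dop p u x := by
  intro x hx
  set T := (toEuclideanLin Qᵀ).toContinuousLinearMap
  have hTadj : T† = (toEuclideanLin Q).toContinuousLinearMap := by
    rw [adjoint_toEuclideanLin_toContinuousLinearMap, transpose_transpose]
  have hT : T ∘L T† = 1 := hTadj ▸ toEuclideanLin_toContinuousLinearMap_comp_eq_one _ _ hQ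
  obtain rfl : u = fun z => U ‖T (z - x₀)‖ := funext fun z => by rw [hu, enorm'_eq_norm]; rfl
  have hv : T (x - x₀) ≠ 0 := fun h => hx (congrArg WithLp.ofLp h)
  have hr : 0 < ‖T (x - x₀)‖ := norm_pos_iff.mpr hv
  have hU' : Differentiable ℝ U := hU.differentiable two_ne_zero
  have hD2 := fderiv_fderiv_comp_affine_apply T
    ((eventually_ne_nhds hv).mono fun w hw => (hasFDerivAt_radial (hU' _) hw).differentiableAt)
    (hasFDerivAt_fderiv_radial hU hv)
  have hside : 0 ≤ deriv (deriv U) ‖T (x - x₀)‖ ∨ ∀ z, ‖T z‖ = ‖z‖ := by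
    obtain rfl | hlt := hkn.eq_or_lt
    · exact Or.inr (norm_map_of_adjoint_comp_self
        (hTadj ▸ toEuclideanLin_toContinuousLinearMap_comp_eq_one _ _ (mul_eq_one_comm.mp hQ)))
    · exact Or.inl (hU2 hlt _ hr)
  have hlam : lamMax (hess (fun z => U ‖T (z - x₀)‖) x) = deriv (deriv U) ‖T (x - x₀)‖ := by
    simp only [lamMax, quadForm_hess, hD2]
    exact (isGreatest_radialHessian_comp hT hv (hU1 _ hr) hside).csSup_eq
  refine DeltaOp_eq_of_quadForm_gradient ?_
  rw [quadForm_hess, hD2, (hasGradientAt_radial_comp (hU' _) hv).gradient,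
    radialHessian_apply_smul_adjoint hT hv, hlam, mul_comm]

/-- Cylindrical Equivalence. -/
theorem stmt_3 {n k : ℕ} (hn : 2 ≤ n) (hk1 : 1 ≤ k) (hkn : k ≤ n)
    (p : ℝ≥0∞) (hp : 2 ≤ p)
    (Q : Matrix (Fin n) (Fin k) ℝ) (hQ : Qᵀ * Q = 1)
    (x₀ : EuclideanSpace ℝ (Fin n))
    (U : ℝ → ℝ) (hU : ContDiff ℝ 2 U)
    (u : EuclideanSpace ℝ (Fin n) → ℝ)
    (hu : ∀ x, u x = U (enorm' (Qᵀ.mulVec fun i => x i - x₀ i)))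
    (hU1 : ∀ r : ℝ, 0 < r → deriv U r / r ≤ deriv (deriv U) r)
    (hU2 : k < n → ∀ r : ℝ, 0 < r → 0 ≤ deriv (deriv U) r) :
    ∀ x : EuclideanSpace ℝ (Fin n), (Qᵀ.mulVec fun i => x i - x₀ i) ≠ 0 →
      DeltaOp p u x =
        (if p = ⊤ then ‖gradient u x‖ ^ (2 : ℝ) else ‖gradient u x‖ ^ (p.toReal - 2))
          * Dop p u x :=
  stmt_3_general hkn p Q hQ x₀ U hU u hu hU1 hU2
end

section
/- (Theorem 1 (i): superposition of dominative p-superharmonic functions.) Let n ≥ 2, 2 ≤ p ≤ ∞, and let u₁, …, u_N ∈ C²(ℝⁿ) satisfy D_p uᵢ ≤ 0 at every point of ℝⁿ for each i = 1, …, N. Then Δ_p[u₁ + ⋯ + u_N] ≤ 0 at every point of ℝⁿ. -/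
open scoped ENNReal
open Filter Matrix

/-!
The Hessian and the Laplacian are additive in `u`, while `λ` is subadditive; more precisely, for
`u = ∑ uᵢ` one has `∇u Hu ∇uᵀ = ∑ ∇u Huᵢ ∇uᵀ ≤ |∇u|² ∑ λ_{uᵢ}`. Inserting this into the `p`-Laplacian
gives `Δ_p u ≤ |∇u|^{p-2} ∑ ((p - 2) λ_{uᵢ} + Δuᵢ) = |∇u|^{p-2} ∑ D_p uᵢ ≤ 0`, and for `p = ∞`
simply `Δ_∞ u ≤ |∇u|² ∑ λ_{uᵢ} ≤ 0`.
-/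

section

variable {n : ℕ}

lemma quadForm_smul (A : Matrix (Fin n) (Fin n) ℝ) (c : ℝ) (z : EuclideanSpace ℝ (Fin n)) :
    quadForm A (c • z) = c ^ 2 * quadForm A z := by
  simp only [quadForm, Finset.mul_sum, PiLp.smul_apply, smul_eq_mul]
  exact Finset.sum_congr rfl fun i _ => Finset.sum_congr rfl fun j _ => by ring

lemma quadForm_sum {ι : Type*} (s : Finset ι) (A : ι → Matrix (Fin n) (Fin n) ℝ)
    (z : EuclideanSpace ℝ (Fin n)) :
    quadForm (∑ k ∈ s, A k) z = ∑ k ∈ s, quadForm (A k) z := by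
  simp only [quadForm, Matrix.sum_apply, Finset.mul_sum, Finset.sum_mul]
  rw [Finset.sum_comm (s := s)]
  exact Finset.sum_congr rfl fun i _ => Finset.sum_comm

lemma bddAbove_quadForm_sphere (A : Matrix (Fin n) (Fin n) ℝ) :
    BddAbove {r : ℝ | ∃ z : EuclideanSpace ℝ (Fin n), ‖z‖ = 1 ∧ r = quadForm A z} := by
  have hcont : Continuous (quadForm A) := by
    unfold quadForm
    fun_prop
  refine ((isCompact_sphere 0 1).bddAbove_image hcont.continuousOn).mono ?_
  rintro r ⟨z, hz, rfl⟩
  exact ⟨z, by simpa using hz, rfl⟩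

lemma quadForm_le_sq_norm_mul_lamMax (A : Matrix (Fin n) (Fin n) ℝ)
    (z : EuclideanSpace ℝ (Fin n)) :
    quadForm A z ≤ ‖z‖ ^ 2 * lamMax A := by
  rcases eq_or_ne z 0 with rfl | hz
  · simp [quadForm]
  have hz' : ‖z‖ ≠ 0 := norm_ne_zero_iff.2 hz
  have hunit : ‖‖z‖⁻¹ • z‖ = 1 := by
    rw [norm_smul, norm_inv, norm_norm, inv_mul_cancel₀ hz']
  calc quadForm A z = ‖z‖ ^ 2 * quadForm A (‖z‖⁻¹ • z) := by
        rw [quadForm_smul, ← mul_assoc, ← mul_pow, mul_inv_cancel₀ hz', one_pow, one_mul]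
    _ ≤ ‖z‖ ^ 2 * lamMax A :=
        mul_le_mul_of_nonneg_left (le_csSup (bddAbove_quadForm_sphere A) ⟨_, hunit, rfl⟩)
          (sq_nonneg _)

lemma quadForm_sum_le {ι : Type*} (s : Finset ι) (A : ι → Matrix (Fin n) (Fin n) ℝ)
    (z : EuclideanSpace ℝ (Fin n)) :
    quadForm (∑ k ∈ s, A k) z ≤ ‖z‖ ^ 2 * ∑ k ∈ s, lamMax (A k) := by
  rw [quadForm_sum, Finset.mul_sum]
  exact Finset.sum_le_sum fun k _ => quadForm_le_sq_norm_mul_lamMax (A k) z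

lemma hess_sum {ι : Type*} (s : Finset ι) (u : ι → EuclideanSpace ℝ (Fin n) → ℝ)
    (x : EuclideanSpace ℝ (Fin n)) (hu : ∀ k ∈ s, ContDiffAt ℝ 2 (u k) x) :
    hess (fun y => ∑ k ∈ s, u k y) x = ∑ k ∈ s, hess (u k) x := by
  ext i j
  simp [hess, Matrix.sum_apply, iteratedFDeriv_fun_sum_apply hu]

lemma lapl_sum {ι : Type*} (s : Finset ι) (u : ι → EuclideanSpace ℝ (Fin n) → ℝ)
    (x : EuclideanSpace ℝ (Fin n)) (hu : ∀ k ∈ s, ContDiffAt ℝ 2 (u k) x) :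
    lapl (fun y => ∑ k ∈ s, u k y) x = ∑ k ∈ s, lapl (u k) x := by
  simp only [lapl, hess_sum s u x hu, Matrix.sum_apply]
  exact Finset.sum_comm

end

lemma rpow_mul_add_mul_rpow_mul_nonpos {a c T Q Λ : ℝ} (ha : 0 ≤ a) (hc : 2 ≤ c)
    (hQ : Q ≤ a ^ 2 * Λ) (hT : (c - 2) * Λ + T ≤ 0) :
    a ^ (c - 2) * T + (c - 2) * a ^ (c - 4) * Q ≤ 0 := by
  -- `a ^ (c - 4) * a ^ 2 = a ^ (c - 2)` fails only for `a = 0`, `c = 2`, where `0 ^ 0 = 1`.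
  have hpow : (c - 2) * a ^ (c - 4) * a ^ 2 = (c - 2) * a ^ (c - 2) := by
    rcases eq_or_ne c 2 with rfl | hc2
    · simp
    have hsum : c - 4 + (2 : ℕ) = c - 2 := by push_cast; ring
    rw [mul_assoc, ← Real.rpow_natCast, ← Real.rpow_add' ha (by rw [hsum]; exact sub_ne_zero.2 hc2),
      hsum]
  calc a ^ (c - 2) * T + (c - 2) * a ^ (c - 4) * Q
      ≤ a ^ (c - 2) * T + (c - 2) * a ^ (c - 4) * (a ^ 2 * Λ) := by
        gcongr
    _ = a ^ (c - 2) * ((c - 2) * Λ + T) := by rw [← mul_assoc, hpow]; ring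
    _ ≤ 0 := mul_nonpos_of_nonneg_of_nonpos (Real.rpow_nonneg ha _) hT

theorem stmt_8_general {n N : ℕ} (p : ℝ≥0∞) (hp : 2 ≤ p)
    (u : Fin N → EuclideanSpace ℝ (Fin n) → ℝ)
    (hu : ∀ i, ContDiff ℝ 2 (u i))
    (hD : ∀ i, ∀ x, Dop p (u i) x ≤ 0) :
    ∀ x, DeltaOp p (fun y => ∑ i, u i y) x ≤ 0 := by
  intro x
  have hu' : ∀ i ∈ Finset.univ, ContDiffAt ℝ 2 (u i) x := fun i _ => (hu i).contDiffAt
  have hQ := quadForm_sum_le Finset.univ (fun i => hess (u i) x)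
    (gradient (fun y => ∑ i, u i y) x)
  rw [← hess_sum _ u x hu'] at hQ
  rcases eq_or_ne p ⊤ with rfl | hp_top
  · have hΛ : ∑ i, lamMax (hess (u i) x) ≤ 0 :=
      Finset.sum_nonpos fun i _ => by simpa [Dop] using hD i x
    simp only [DeltaOp]
    exact hQ.trans (mul_nonpos_of_nonneg_of_nonpos (sq_nonneg _) hΛ)
  · have hc : 2 ≤ p.toReal := by
      simpa using (ENNReal.toReal_le_toReal (by norm_num) hp_top).2 hp
    have hT : (p.toReal - 2) * ∑ i, lamMax (hess (u i) x) + lapl (fun y => ∑ i, u i y) x ≤ 0 := by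
      rw [lapl_sum _ u x hu', Finset.mul_sum, ← Finset.sum_add_distrib]
      exact Finset.sum_nonpos fun i _ => by simpa [Dop, hp_top] using hD i x
    simp only [DeltaOp, if_neg hp_top]
    exact rpow_mul_add_mul_rpow_mul_nonpos (norm_nonneg _) hc hQ hT

/-- Theorem 1 (i), superposition of dominative p-superharmonic functions. -/
theorem stmt_8 {n N : ℕ} (hn : 2 ≤ n) (p : ℝ≥0∞) (hp : 2 ≤ p)
    (u : Fin N → EuclideanSpace ℝ (Fin n) → ℝ)
    (hu : ∀ i, ContDiff ℝ 2 (u i))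
    (hD : ∀ i, ∀ x, Dop p (u i) x ≤ 0) :
    ∀ x, DeltaOp p (fun y => ∑ i, u i y) x ≤ 0 :=
  stmt_8_general p hp u hu hD
end
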